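/- Let k be a field, n ≥ 2, λ₁,…,λₙ pairwise distinct nonzero elements of k, X = (k^n, k^n; id, diag(λᵢ), cyclic shift) and Y = (k, k; 1, 0, 0) as representations of the 3-Kronecker quiver. Then Ext¹(Y, X) has k-dimension n. -/

import Mathlib

/-! Hom(Y, X), the kernel of `extMap`, vanishes because the cyclic shift γ is injective; so the
cokernel of `extMap : k²ⁿ → k³ⁿ` has dimension 3n − 2n = n. -/

/- dim Ext¹(Y, X) = n for X = (k^n,k^n; id, diag(λᵢ), cyclic shift), Y = (k,k;1,0,0).
   Ext¹(Y,X) is computed as the cokernel of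
   Φ : X₁ ⊕ X₂ → X₂³, (v,w) ↦ (α(v) − w, β(v), γ(v)). -/

def kroneckerBeta (k : Type) [Field k] (n : ℕ) (l : Fin n → k) :
    (Fin n → k) →ₗ[k] (Fin n → k) where
  toFun v i := l i * v i
  map_add' u v := by funext i; simp [mul_add]
  map_smul' c v := by funext i; simp; ring

def kroneckerGamma (k : Type) [Field k] (n : ℕ) :
    (Fin n → k) →ₗ[k] (Fin n → k) where
  toFun v i := v ((finRotate n).symm i)
  map_add' u v := rfl
  map_smul' c v := rfl

/-- The map whose cokernel is Ext¹(Y, X): (v, w) ↦ (v − w, β v, γ v). -/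
noncomputable def extMap (k : Type) [Field k] (n : ℕ) (l : Fin n → k) :
    ((Fin n → k) × (Fin n → k)) →ₗ[k] ((Fin n → k) × (Fin n → k) × (Fin n → k)) :=
  (LinearMap.fst k (Fin n → k) (Fin n → k) - LinearMap.snd k (Fin n → k) (Fin n → k)).prod
    (((kroneckerBeta k n l).comp (LinearMap.fst k (Fin n → k) (Fin n → k))).prod
      ((kroneckerGamma k n).comp (LinearMap.fst k (Fin n → k) (Fin n → k))))

section

variable (k : Type) [Field k] (n : ℕ)

theorem kroneckerGamma_injective : Function.Injective (kroneckerGamma k n) :=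
  (finRotate n).symm.surjective.injective_comp_right

theorem extMap_injective (l : Fin n → k) : Function.Injective (extMap k n l) := by
  rw [← LinearMap.ker_eq_bot, LinearMap.ker_eq_bot']
  rintro ⟨v, w⟩ h
  have hvw : v - w = 0 := congrArg Prod.fst h
  have hγv : kroneckerGamma k n v = 0 := congrArg (·.2.2) h
  have hv : v = 0 := kroneckerGamma_injective k n (by rw [hγv, map_zero])
  rw [hv, zero_sub, neg_eq_zero] at hvw
  rw [hv, hvw, Prod.mk_zero_zero]

end

theorem stmt3_general (k : Type) [Field k] (n : ℕ) (l : Fin n → k) :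
    Module.finrank k
      (((Fin n → k) × (Fin n → k) × (Fin n → k)) ⧸ LinearMap.range (extMap k n l)) = n := by
  rw [Submodule.finrank_quotient, LinearMap.finrank_range_of_inj (extMap_injective k n l)]
  simp only [Module.finrank_prod, Module.finrank_fin_fun]
  omega

theorem stmt3 (k : Type) [Field k] (n : ℕ) (hn : 2 ≤ n) (l : Fin n → k)
    (hne : ∀ i, l i ≠ 0) (hinj : Function.Injective l) :
    Module.finrank k
      (((Fin n → k) × (Fin n → k) × (Fin n → k)) ⧸ LinearMap.range (extMap k n l)) = n :=
  stmt3_general k n l
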